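/- Let g ∈ ℂ[[x]][y] be nonzero with deg_y(g) < e_1. Then for every j = 1, …, s and every σ ∈ ℕ, ϑ_{ι_j}(∂^σ g/∂y^σ) ≥ ϑ_{ι_j}(g) − σ·e_jλ_1 (with the convention that +∞ is greater than or equal to every value). -/

import Mathlib

/-!
Write `w = e_j λ_1`; it is the order of `y_j`, all other terms of `y_j` having larger exponents.
The term `a_ℓ(x) y^ℓ` of `g` then pulls back to a series of order exactly `e_j ord(a_ℓ) + ℓ w`.
For `ℓ ≠ ℓ' < e_1 = k_1` these orders differ, as equality would force `(ℓ - ℓ') λ_1 ∈ ℤ`, so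
`ϑ(g)` is their minimum with no cancellation. Differentiating `σ` times moves `a_{ℓ+σ}`
(times an integer) to `y^ℓ`, which lowers the order of that term by `σ w`; hence every term of
`∂^σ g` has order at least `ϑ(g) - σ w`.
-/

noncomputable def psOrdQ (f : PowerSeries ℂ) : WithTop ℚ :=
  WithTop.map (fun m : ℕ => (m : ℚ)) f.order

/-- Substitution x ↦ t^e on power series (for e ≥ 1). -/
noncomputable def expandPS (e : ℕ) (f : PowerSeries ℂ) : PowerSeries ℂ :=
  PowerSeries.mk fun n => if e ∣ n then PowerSeries.coeff (R := ℂ) (n / e) f else 0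

/-- Truncated parametrization pullback on ℂ[[x]][y]: x ↦ t^e, y ↦ yi. -/
noncomputable def iotaPS (e : ℕ) (yi : PowerSeries ℂ) (g : Polynomial (PowerSeries ℂ)) :
    PowerSeries ℂ :=
  ∑ ℓ ∈ g.support, expandPS e (g.coeff ℓ) * yi ^ ℓ

open Polynomial

namespace PowerSeries

variable {R ι : Type*} [Semiring R]

theorem le_order_sum (s : Finset ι) (f : ι → R⟦X⟧) {c : ℕ∞} (h : ∀ i ∈ s, c ≤ (f i).order) :
    c ≤ (∑ i ∈ s, f i).order :=
  Finset.sum_induction f (fun φ => c ≤ φ.order)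
    (fun _ _ ha hb => (le_min ha hb).trans (min_order_le_order_add _ _)) (by simp) h

theorem order_sum_of_injOn [DecidableEq ι] (s : Finset ι) (f : ι → R⟦X⟧)
    (hf : Set.InjOn (fun i => (f i).order) s) :
    (∑ i ∈ s, f i).order = s.inf fun i => (f i).order := by
  induction s using Finset.induction_on with
  | empty => simp
  | @insert a s ha ih =>
    rw [Finset.coe_insert] at hf
    have hsum := ih (hf.mono (Set.subset_insert a s))
    rw [Finset.sum_insert ha, Finset.inf_insert, ← hsum]
    rcases s.eq_empty_or_nonempty with rfl | hs
    · simp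
    refine order_add_of_order_ne _ _ fun heq => ha ?_
    obtain ⟨i, hi, hinf⟩ := Finset.exists_mem_eq_inf s hs fun i => (f i).order
    rw [hsum, hinf] at heq
    exact hf (Set.mem_insert a s) (Set.mem_insert_of_mem a hi) heq ▸ hi

end PowerSeries

open PowerSeries

theorem order_expandPS {m : ℕ} (hm : 0 < m) (f : PowerSeries ℂ) :
    (expandPS m f).order = m * f.order := by
  rcases eq_or_ne f 0 with rfl | hf
  · have h0 : expandPS m 0 = 0 := by ext n; simp [expandPS]
    rw [h0, order_zero, ENat.mul_top (by exact_mod_cast hm.ne')]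
  obtain ⟨n, hn⟩ := ENat.ne_top_iff_exists.1 (order_eq_top.not.2 hf)
  obtain ⟨hfn, hlt⟩ := order_eq_nat.1 hn.symm
  rw [← hn, ← Nat.cast_mul, order_eq_nat]
  refine ⟨by simpa [expandPS, hm.ne'] using hfn, fun i hi => ?_⟩
  simp only [expandPS, coeff_mk]
  split_ifs with hdvd
  · obtain ⟨q, rfl⟩ := hdvd
    rw [Nat.mul_div_cancel_left q hm]
    exact hlt q (Nat.lt_of_mul_lt_mul_left hi)
  · rfl

section iotaPS

variable {m N : ℕ} {Y : PowerSeries ℂ}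

theorem le_order_iotaPS (hm : 0 < m) (hY : (N : ℕ∞) ≤ Y.order) {g : (PowerSeries ℂ)[X]}
    {c : ℕ∞} (hc : ∀ ℓ ∈ g.support, c ≤ m * (g.coeff ℓ).order + ℓ * N) :
    c ≤ (iotaPS m Y g).order :=
  le_order_sum _ _ fun ℓ hℓ => calc
    c ≤ m * (g.coeff ℓ).order + ℓ * N := hc ℓ hℓ
    _ ≤ (expandPS m (g.coeff ℓ)).order + ℓ • Y.order := by
      rw [order_expandPS hm, nsmul_eq_mul]; gcongr
    _ ≤ (expandPS m (g.coeff ℓ) * Y ^ ℓ).order :=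
      (add_le_add_right (le_order_pow Y ℓ) _).trans (le_order_mul _ _)

theorem le_order_iotaPS_iterate_derivative_add (hm : 0 < m) (hY : (N : ℕ∞) ≤ Y.order)
    {g : (PowerSeries ℂ)[X]} {c : ℕ∞}
    (hc : ∀ ℓ ∈ g.support, c ≤ m * (g.coeff ℓ).order + ℓ * N) (σ : ℕ) :
    c ≤ (iotaPS m Y (derivative^[σ] g)).order + σ * N := by
  rw [← tsub_le_iff_right]
  refine le_order_iotaPS hm hY fun ℓ hℓ => tsub_le_iff_right.2 ?_
  have hcoeff := coeff_iterate_derivative (k := σ) g ℓ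
  have hℓσ : ℓ + σ ∈ g.support := by
    rw [mem_support_iff] at hℓ ⊢
    exact fun h0 => hℓ (by rw [hcoeff, h0, smul_zero])
  calc c ≤ m * (g.coeff (ℓ + σ)).order + (ℓ + σ : ℕ) * N := hc _ hℓσ
    _ = m * (g.coeff (ℓ + σ)).order + ℓ * N + σ * N := by push_cast; ring
    _ ≤ m * ((derivative^[σ] g).coeff ℓ).order + ℓ * N + σ * N := by
      rw [hcoeff, ← Nat.cast_smul_eq_nsmul ℂ]
      gcongr
      exact le_order_smul

theorem order_iotaPS_eq_inf (hm : 0 < m) (hY : Y.order = N) {g : (PowerSeries ℂ)[X]}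
    (hinj : Set.InjOn (fun ℓ => m * (g.coeff ℓ).order + ℓ * N) g.support) :
    (iotaPS m Y g).order = g.support.inf fun ℓ => m * (g.coeff ℓ).order + ℓ * N := by
  have hterm (ℓ : ℕ) : (expandPS m (g.coeff ℓ) * Y ^ ℓ).order = m * (g.coeff ℓ).order + ℓ * N := by
    rw [order_mul, order_pow, order_expandPS hm, hY, nsmul_eq_mul]
  simp only [iotaPS, ← hterm] at hinj ⊢
  exact order_sum_of_injOn _ _ hinj

end iotaPS

theorem psOrdQ_le_add_of_order_le {f g : PowerSeries ℂ} {n : ℕ} (h : f.order ≤ g.order + n) :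
    psOrdQ f ≤ psOrdQ g + (n : ℚ) := by
  change ENat.map (Nat.cast : ℕ → ℚ) f.order ≤ ENat.map Nat.cast g.order + ((n : ℚ) : WithTop ℚ)
  induction hg : g.order using ENat.recTopCoe with
  | top => simp
  | coe b =>
    rw [hg, ← Nat.cast_add] at h
    obtain ⟨a, ha⟩ := ENat.ne_top_iff_exists.1 (ne_top_of_le_ne_top (ENat.natCast_ne_top _) h)
    rw [← ha] at h ⊢
    simp only [ENat.map_natCast]
    exact_mod_cast h

namespace Polynomial

variable {R : Type*} [CommSemiring R]

theorem order_coe_sum_C_mul_X_pow_add {ι : Type*} {S : Finset ι} {i₀ : ι} (hi₀ : i₀ ∈ S)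
    {c : ι → R} (hc : c i₀ ≠ 0) {E : ι → ℕ} {φ : ι → R[X]}
    (hE : ∀ i ∈ S, i ≠ i₀ → E i₀ < E i) (hφ : ∀ i ∈ S, ∀ n ∈ (φ i).support, E i₀ < n) :
    ((∑ i ∈ S, (C (c i) * X ^ E i + φ i) : R[X]) : R⟦X⟧).order = E i₀ := by
  have hφ_coeff {i : ι} (hi : i ∈ S) {n : ℕ} (hn : n ≤ E i₀) : (φ i).coeff n = 0 :=
    notMem_support_iff.1 fun h => (hφ i hi n h).not_ge hn
  have hcoeff {n : ℕ} (hn : n ≤ E i₀) :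
      (∑ i ∈ S, (C (c i) * X ^ E i + φ i)).coeff n = if n = E i₀ then c i₀ else 0 := by
    rw [finsetSum_coeff, Finset.sum_eq_single_of_mem i₀ hi₀]
    · simp [coeff_X_pow, hφ_coeff hi₀ hn]
    · intro i hi hne
      have hEi : n ≠ E i := by have := hE i hi hne; omega
      simp [coeff_X_pow, hφ_coeff hi hn, hEi]
  rw [PowerSeries.order_eq_nat]
  simp only [coeff_coe]
  exact ⟨by simp [hcoeff le_rfl, hc], fun n hn => by simp [hcoeff hn.le, hn.ne]⟩

theorem order_coe_sum_Icc_eq_of_strictMonoOn {j : ℕ} (hj : 1 ≤ j) {w : ℚ} (hw : 0 < w)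
    {lam : ℕ → ℚ} (hlam : StrictMonoOn lam (Set.Icc 1 j)) {c : ℕ → R} (hc : c 1 ≠ 0)
    {E : ℕ → ℕ} (hE : ∀ ℓ, 1 ≤ ℓ → ℓ ≤ j → (E ℓ : ℚ) = w * lam ℓ) {ψ : ℕ → R[X]}
    (hψ : ∀ ℓ, 1 ≤ ℓ → ℓ ≤ j → ∀ n ∈ (ψ ℓ).support, w * lam ℓ < n) :
    ((∑ ℓ ∈ Finset.Icc 1 j, (C (c ℓ) * X ^ E ℓ + ψ ℓ) : R[X]) : R⟦X⟧).order = E 1 := by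
  refine order_coe_sum_C_mul_X_pow_add (Finset.left_mem_Icc.2 hj) hc (fun ℓ hℓ hne => ?_)
    fun ℓ hℓ n hn => ?_
  all_goals obtain ⟨h1, hℓj⟩ := Finset.mem_Icc.1 hℓ
  · have : (E 1 : ℚ) < E ℓ := by
      rw [hE 1 le_rfl hj, hE ℓ h1 hℓj]
      gcongr
      exact hlam ⟨le_rfl, hj⟩ ⟨h1, hℓj⟩ (by omega)
    exact_mod_cast this
  · have : (E 1 : ℚ) < n := by
      rw [hE 1 le_rfl hj]
      refine lt_of_le_of_lt ?_ (hψ ℓ h1 hℓj n hn)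
      gcongr
      exact hlam.monotoneOn ⟨le_rfl, hj⟩ ⟨h1, hℓj⟩ h1
    exact_mod_cast this

theorem lt_of_mem_support_of_comp_X_pow_div {a b : ℕ} (ha : 0 < a) (hab : a ∣ b) (hb : 0 < b)
    {p q : R[X]} (hpq : p.comp (X ^ (b / a)) = q) {μ : ℚ} (hq : ∀ n ∈ q.support, b * μ < n)
    {n : ℕ} (hn : n ∈ p.support) : a * μ < n := by
  obtain ⟨k, rfl⟩ := hab
  rw [Nat.mul_div_cancel_left k ha] at hpq
  have hk : 0 < k := Nat.pos_of_mul_pos_left hb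
  have hkn : k * n ∈ q.support := by
    rw [mem_support_iff, ← hpq, ← expand_eq_comp_X_pow, coeff_expand_mul' hk]
    exact mem_support_iff.1 hn
  have := hq _ hkn
  push_cast at this
  exact lt_of_mul_lt_mul_left (by linarith) (Nat.cast_nonneg (α := ℚ) k)

end Polynomial

theorem injOn_mul_add_mul_of_lt {m N k : ℕ} {μ : ℚ} (hm : 0 < m) (hN : (N : ℚ) = m * μ)
    (hk : ∀ d : ℕ, 0 < d → (∃ z : ℤ, (d : ℚ) * μ = z) → k ≤ d) {S : Set ℕ} {f : ℕ → ℕ∞}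
    (hf : ∀ ℓ ∈ S, f ℓ ≠ ⊤) (hS : ∀ ℓ ∈ S, ℓ < k) :
    Set.InjOn (fun ℓ => m * f ℓ + ℓ * N) S := by
  intro ℓ hℓ ℓ' hℓ' heq
  by_contra hne
  wlog hlt : ℓ' < ℓ generalizing ℓ ℓ'
  · exact this hℓ' hℓ heq.symm (Ne.symm hne) (lt_of_le_of_ne (not_lt.1 hlt) hne)
  obtain ⟨a, ha⟩ := ENat.ne_top_iff_exists.1 (hf ℓ hℓ)
  obtain ⟨a', ha'⟩ := ENat.ne_top_iff_exists.1 (hf ℓ' hℓ')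
  simp only [← ha, ← ha'] at heq
  have heqQ : (m * a + ℓ * N : ℚ) = m * a' + ℓ' * N := by exact_mod_cast heq
  have hint : ((ℓ - ℓ' : ℕ) : ℚ) * μ = ((a' - a : ℤ) : ℚ) := by
    refine mul_left_cancel₀ (Nat.cast_ne_zero.2 hm.ne' : (m : ℚ) ≠ 0) ?_
    rw [hN] at heqQ
    push_cast [hlt.le]
    linear_combination heqQ
  have := hk (ℓ - ℓ') (by omega) ⟨_, hint⟩
  have := hS ℓ hℓ
  omega

theorem le_of_mul_eq_intCast_of_isLeast {H : AddSubgroup ℚ} (h1 : (1 : ℚ) ∈ H) {μ : ℚ} {k : ℕ}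
    (hk : IsLeast {m : ℕ | 0 < m ∧ (m : ℚ) * μ ∈ H} k) {d : ℕ} (hd : 0 < d) {z : ℤ}
    (hz : (d : ℚ) * μ = z) : k ≤ d :=
  hk.2 ⟨hd, by rw [hz, ← zsmul_one]; exact H.zsmul_mem h1 z⟩

section

variable {s : ℕ} {kk e : ℕ → ℕ}

theorem pos_of_eq_mul_pred (he0 : e 0 = 1) (hkk : ∀ i, 1 ≤ i → i ≤ s → 0 < kk i)
    (he : ∀ i, 1 ≤ i → i ≤ s → e i = kk i * e (i - 1)) {i : ℕ} (hi : i ≤ s) : 0 < e i := by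
  induction i with
  | zero => simp [he0]
  | succ i ih =>
    rw [he (i + 1) (by omega) hi, Nat.add_sub_cancel]
    exact Nat.mul_pos (hkk _ (by omega) hi) (ih (by omega))

theorem dvd_of_eq_mul_pred (he : ∀ i, 1 ≤ i → i ≤ s → e i = kk i * e (i - 1)) {i j : ℕ}
    (hji : j ≤ i) (his : i ≤ s) : e j ∣ e i := by
  induction i, hji using Nat.le_induction with
  | base => exact dvd_rfl
  | succ i hji ih =>
    rw [he (i + 1) (by omega) his, Nat.add_sub_cancel]
    exact (ih (by omega)).mul_left _

end

theorem stmt_16_general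
    (s : ℕ) (hs : 1 ≤ s)
    (lam : ℕ → ℚ)
    (hlam_mono : ∀ i, 1 ≤ i → i < s → lam i < lam (i + 1))
    (M : ℕ → AddSubgroup ℚ)
    (hM : ∀ i, M i = AddSubgroup.closure ({1} ∪ lam '' Set.Icc 1 i))
    (kk : ℕ → ℕ)
    (hkk : ∀ i, 1 ≤ i → i ≤ s →
      IsLeast {m : ℕ | 0 < m ∧ (m : ℚ) * lam i ∈ M (i - 1)} (kk i))
    (e : ℕ → ℕ) (he0 : e 0 = 1)
    (he : ∀ i, 1 ≤ i → i ≤ s → e i = kk i * e (i - 1))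
    (c : ℕ → ℂ) (hc : ∀ ℓ, 1 ≤ ℓ → ℓ ≤ s → c ℓ ≠ 0)
    (φ : ℕ → Polynomial ℂ)
    (hφord : ∀ ℓ, 1 ≤ ℓ → ℓ ≤ s → ∀ a ∈ (φ ℓ).support, (e s : ℚ) * lam ℓ < (a : ℚ))
    (E : ℕ → ℕ → ℕ)
    (hE : ∀ i, 1 ≤ i → i ≤ s → ∀ ℓ, 1 ≤ ℓ → ℓ ≤ i → (E i ℓ : ℚ) = (e i : ℚ) * lam ℓ)
    (φs : ℕ → ℕ → Polynomial ℂ)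
    (hφs : ∀ i, 1 ≤ i → i ≤ s → ∀ ℓ, 1 ≤ ℓ → ℓ ≤ i →
      (φs i ℓ).comp (Polynomial.X ^ (e s / e i)) = φ ℓ)
    (Y : ℕ → Polynomial ℂ)
    (hY : ∀ i, 1 ≤ i → i ≤ s →
      Y i = ∑ ℓ ∈ Finset.Icc 1 i, (Polynomial.C (c ℓ) * Polynomial.X ^ E i ℓ + φs i ℓ)) :
    ∀ g : Polynomial (PowerSeries ℂ), g ≠ 0 → g.natDegree < e 1 →
      ∀ j, 1 ≤ j → j ≤ s → ∀ σ : ℕ, 1 ≤ σ →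
        psOrdQ (iotaPS (e j) ((Y j : Polynomial ℂ) : PowerSeries ℂ) g) ≤
          psOrdQ (iotaPS (e j) ((Y j : Polynomial ℂ) : PowerSeries ℂ)
              (Polynomial.derivative^[σ] g)) +
            (((σ : ℚ) * ((e j : ℚ) * lam 1) : ℚ) : WithTop ℚ) := by
  intro g _ hdeg j hj1 hjs σ _
  have hkk_pos (i : ℕ) (h1 : 1 ≤ i) (his : i ≤ s) : 0 < kk i := (hkk i h1 his).1.1
  have hej : 0 < e j := pos_of_eq_mul_pred he0 hkk_pos he hjs
  have hlam : StrictMonoOn lam (Set.Icc 1 s) :=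
    strictMonoOn_of_lt_add_one Set.ordConnected_Icc fun i _ hi hi1 => hlam_mono i hi.1 hi1.2
  have hE1 : (E j 1 : ℚ) = e j * lam 1 := hE j hj1 hjs 1 le_rfl hj1
  have hYj : ((Y j : Polynomial ℂ) : PowerSeries ℂ).order = E j 1 := by
    rw [hY j hj1 hjs]
    refine order_coe_sum_Icc_eq_of_strictMonoOn hj1 (by exact_mod_cast hej)
      (hlam.mono (Set.Icc_subset_Icc_right hjs)) (hc 1 le_rfl hs) (hE j hj1 hjs)
      fun ℓ h1 hℓj n hn => ?_
    exact lt_of_mem_support_of_comp_X_pow_div hej (dvd_of_eq_mul_pred he hjs le_rfl)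
      (pos_of_eq_mul_pred he0 hkk_pos he le_rfl) (hφs j hj1 hjs ℓ h1 hℓj)
      (hφord ℓ h1 (hℓj.trans hjs)) hn
  have he1 : ∀ d : ℕ, 0 < d → (∃ z : ℤ, (d : ℚ) * lam 1 = z) → e 1 ≤ d := by
    rintro d hd ⟨z, hz⟩
    have h1 : (1 : ℚ) ∈ M (1 - 1) := by
      rw [hM]
      exact AddSubgroup.subset_closure (Set.mem_union_left _ (Set.mem_singleton 1))
    rw [he 1 le_rfl hs, Nat.sub_self, he0, mul_one]
    exact le_of_mul_eq_intCast_of_isLeast h1 (hkk 1 le_rfl hs) hd hz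
  have hinj : Set.InjOn (fun ℓ => (e j : ℕ∞) * (g.coeff ℓ).order + ℓ * E j 1) g.support :=
    injOn_mul_add_mul_of_lt hej hE1 he1
      (fun ℓ hℓ => PowerSeries.order_eq_top.not.2 (mem_support_iff.1 hℓ))
      fun ℓ hℓ => (le_natDegree_of_mem_supp ℓ hℓ).trans_lt hdeg
  have key := le_order_iotaPS_iterate_derivative_add hej hYj.ge
    (fun ℓ hℓ => Finset.inf_le (f := fun ℓ => (e j : ℕ∞) * (g.coeff ℓ).order + ℓ * E j 1) hℓ) σ
  rw [← order_iotaPS_eq_inf hej hYj hinj, ← Nat.cast_mul] at key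
  convert psOrdQ_le_add_of_order_le key using 3
  push_cast
  rw [hE1]

theorem stmt_16
    (s : ℕ) (hs : 1 ≤ s)
    (lam : ℕ → ℚ) (hlam1 : 1 < lam 1)
    (hlam_mono : ∀ i, 1 ≤ i → i < s → lam i < lam (i + 1))
    (M : ℕ → AddSubgroup ℚ)
    (hM : ∀ i, M i = AddSubgroup.closure ({1} ∪ lam '' Set.Icc 1 i))
    (hlamM : ∀ i, 1 ≤ i → i ≤ s → lam i ∉ M (i - 1))
    (kk : ℕ → ℕ)
    (hkk : ∀ i, 1 ≤ i → i ≤ s →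
      IsLeast {m : ℕ | 0 < m ∧ (m : ℚ) * lam i ∈ M (i - 1)} (kk i))
    (e : ℕ → ℕ) (he0 : e 0 = 1)
    (he : ∀ i, 1 ≤ i → i ≤ s → e i = kk i * e (i - 1))
    (gam : ℕ → ℕ → ℚ)
    (hgam1 : ∀ j, 1 ≤ j → j ≤ s → gam j 1 = (e j : ℚ) * lam 1)
    (hgam : ∀ j, 1 ≤ j → j ≤ s → ∀ ℓ, 1 ≤ ℓ → ℓ ≤ j - 1 →
      gam j (ℓ + 1) = (kk ℓ : ℚ) * gam j ℓ - (e j : ℚ) * lam ℓ + (e j : ℚ) * lam (ℓ + 1))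
    (c : ℕ → ℂ) (hc : ∀ ℓ, 1 ≤ ℓ → ℓ ≤ s → c ℓ ≠ 0)
    (φ : ℕ → Polynomial ℂ)
    (hφ0 : ∀ ℓ, 1 ≤ ℓ → ℓ ≤ s → (φ ℓ).coeff 0 = 0)
    (hφsupp : ∀ ℓ, 1 ≤ ℓ → ℓ ≤ s → ∀ a ∈ (φ ℓ).support,
      ∃ m ∈ M ℓ, (a : ℚ) = (e s : ℚ) * m)
    (hφord : ∀ ℓ, 1 ≤ ℓ → ℓ ≤ s → ∀ a ∈ (φ ℓ).support, (e s : ℚ) * lam ℓ < (a : ℚ))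
    (hφdeg : ∀ ℓ, 1 ≤ ℓ → ℓ < s → ∀ a ∈ (φ ℓ).support, (a : ℚ) < (e s : ℚ) * lam (ℓ + 1))
    (E : ℕ → ℕ → ℕ)
    (hE : ∀ i, 1 ≤ i → i ≤ s → ∀ ℓ, 1 ≤ ℓ → ℓ ≤ i → (E i ℓ : ℚ) = (e i : ℚ) * lam ℓ)
    (φs : ℕ → ℕ → Polynomial ℂ)
    (hφs : ∀ i, 1 ≤ i → i ≤ s → ∀ ℓ, 1 ≤ ℓ → ℓ ≤ i →
      (φs i ℓ).comp (Polynomial.X ^ (e s / e i)) = φ ℓ)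
    (Y : ℕ → Polynomial ℂ)
    (hY : ∀ i, 1 ≤ i → i ≤ s →
      Y i = ∑ ℓ ∈ Finset.Icc 1 i, (Polynomial.C (c ℓ) * Polynomial.X ^ E i ℓ + φs i ℓ)) :
    ∀ g : Polynomial (PowerSeries ℂ), g ≠ 0 → g.natDegree < e 1 →
      ∀ j, 1 ≤ j → j ≤ s → ∀ σ : ℕ, 1 ≤ σ →
        psOrdQ (iotaPS (e j) ((Y j : Polynomial ℂ) : PowerSeries ℂ) g) ≤
          psOrdQ (iotaPS (e j) ((Y j : Polynomial ℂ) : PowerSeries ℂ)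
              (Polynomial.derivative^[σ] g)) +
            (((σ : ℚ) * ((e j : ℚ) * lam 1) : ℚ) : WithTop ℚ) :=
  stmt_16_general s hs lam hlam_mono M hM kk hkk e he0 he c hc φ hφord E hE φs hφs Y hY
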